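/- Let (X_a,X_b) be a random pair whose distribution on [0,∞)^2 is absolutely continuous with joint density f_{a,b} and marginal densities f_a, f_b. Assume: there is a positive function g, regularly varying at infinity with index −α−1<−1, with lim_{t→∞} f_a(t)/g(t)=c_a∈(0,∞) and lim_{t→∞} f_b(t)/g(t)=c_b∈(0,∞); and there are probability densities q_{a,b} and q_{b,a} on (0,∞) such that for every y∈(0,∞), lim_{t→∞} t·f_{a,b}(t,ty)/f_a(t)=q_{a,b}(y) and lim_{t→∞} t·f_{a,b}(ty,t)/f_b(t)=q_{b,a}(y). Then for Lebesgue-almost every y∈(0,∞): c_b·y^α·q_{b,a}(y) = c_a·y^{−2}·q_{a,b}(1/y). -/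

import Mathlib

open MeasureTheory ProbabilityTheory Filter Topology
open scoped ENNReal

/-- `g` is regularly varying at infinity with index `ρ`. -/
def RegularlyVarying (g : ℝ → ℝ) (ρ : ℝ) : Prop :=
  (∀ᶠ t in atTop, 0 < g t) ∧
    ∀ l : ℝ, 0 < l → Tendsto (fun t => g (l * t) / g t) atTop (𝓝 (l ^ ρ))

/-!
Write `t f_{a,b}(ty, t) / f_b(t)` as the product of `(ty) f_{a,b}(ty, t) / f_a(ty)`, which tends
to `q_{a,b}(1/y)`, of `f_a(ty) / f_b(t)`, which tends to `c_a y^{-α-1} / c_b` because both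
marginals are asymptotic to multiples of the regularly varying `g`, and of `1/y`. Uniqueness of
limits then identifies `q_{b,a}(y)` for every `y > 0`.
-/

lemma eventually_ne_zero_of_tendsto_div {ι 𝕜 : Type*} [DivisionRing 𝕜] [TopologicalSpace 𝕜]
    [T1Space 𝕜] {f g : ι → 𝕜} {l : Filter ι} {a : 𝕜}
    (hf : Tendsto (fun t => f t / g t) l (𝓝 a)) (ha : a ≠ 0) : ∀ᶠ t in l, f t ≠ 0 := by
  filter_upwards [hf.eventually_ne ha] with t ht hft
  simp [hft] at ht

lemma RegularlyVarying.tendsto_div_comp_mul {g f h : ℝ → ℝ} {ρ a b y : ℝ}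
    (hg : RegularlyVarying g ρ) (hf : Tendsto (fun t => f t / g t) atTop (𝓝 a))
    (hh : Tendsto (fun t => h t / g t) atTop (𝓝 b)) (hb : b ≠ 0) (hy : 0 < y) :
    Tendsto (fun t => f (t * y) / h t) atTop (𝓝 (a * y ^ ρ / b)) := by
  have hty : Tendsto (fun t => t * y) atTop atTop := tendsto_id.atTop_mul_const hy
  have hprod := ((hf.comp hty).mul (hg.2 y hy)).div hh hb
  refine hprod.congr' ?_
  filter_upwards [hg.1, hty.eventually hg.1] with t hgt hgty
  show f (t * y) / g (t * y) * (g (y * t) / g t) / (h t / g t) = f (t * y) / h t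
  rw [mul_comm y t]
  field_simp

theorem density_increment_reversal_general
    (fab : ℝ → ℝ → ℝ)
    (fa fb : ℝ → ℝ)
    (g : ℝ → ℝ) (α : ℝ) (hg : RegularlyVarying g (-α - 1))
    (ca cb : ℝ) (hca : 0 < ca) (hcb : 0 < cb)
    (hfa_lim : Tendsto (fun t => fa t / g t) atTop (𝓝 ca))
    (hfb_lim : Tendsto (fun t => fb t / g t) atTop (𝓝 cb))
    (qab qba : ℝ → ℝ)
    (hqab : ∀ y : ℝ, 0 < y →
      Tendsto (fun t => t * fab t (t * y) / fa t) atTop (𝓝 (qab y)))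
    (hqba : ∀ y : ℝ, 0 < y →
      Tendsto (fun t => t * fab (t * y) t / fb t) atTop (𝓝 (qba y))) :
    ∀ᵐ y ∂(volume.restrict (Set.Ioi (0:ℝ))),
      cb * y ^ α * qba y = ca * y ^ (-2 : ℝ) * qab (1 / y) := by
  refine ae_restrict_of_forall_mem measurableSet_Ioi fun y (hy : 0 < y) => ?_
  have hty : Tendsto (fun t => t * y) atTop atTop := tendsto_id.atTop_mul_const hy
  have hrev : Tendsto (fun t => t * y * fab (t * y) t / fa (t * y)) atTop
      (𝓝 (qab (1 / y))) := by
    refine (hqab (1 / y) (one_div_pos.2 hy)).comp hty |>.congr fun t => ?_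
    simp only [Function.comp_apply, mul_one_div, mul_div_cancel_right₀ _ hy.ne']
  have hratio := hg.tendsto_div_comp_mul hfa_lim hfb_lim hcb.ne' hy
  have hlim : Tendsto (fun t => t * fab (t * y) t / fb t) atTop
      (𝓝 (qab (1 / y) * (ca * y ^ (-α - 1) / cb) / y)) := by
    refine (hrev.mul hratio).div_const y |>.congr' ?_
    filter_upwards [hty.eventually (eventually_ne_zero_of_tendsto_div hfa_lim hca.ne')]
      with t hfat
    field_simp
  have hpow : y ^ (-2 : ℝ) = (y ^ 2)⁻¹ := by
    rw [Real.rpow_neg hy.le]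
    norm_cast
  rw [tendsto_nhds_unique (hqba y hy) hlim, Real.rpow_sub hy, Real.rpow_one, hpow,
    Real.rpow_neg hy.le]
  field_simp

/-- equation `eq:quba`: for an absolutely continuous pair with balanced
regularly varying marginal densities and limiting conditional densities `q_{a,b}`, `q_{b,a}`,
one has `c_b y^α q_{b,a}(y) = c_a y^{-2} q_{a,b}(1/y)` for Lebesgue-a.e. `y ∈ (0,∞)`. -/
theorem density_increment_reversal
    {Ω : Type*} [MeasurableSpace Ω] (μ : Measure Ω) [IsProbabilityMeasure μ]
    (Xa Xb : Ω → ℝ) (hXa : Measurable Xa) (hXb : Measurable Xb)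
    (hXann : ∀ ω, 0 ≤ Xa ω) (hXbnn : ∀ ω, 0 ≤ Xb ω)
    (fab : ℝ → ℝ → ℝ) (hfabnn : ∀ x y, 0 ≤ fab x y)
    (hfabmeas : Measurable fun p : ℝ × ℝ => fab p.1 p.2)
    (hjoint : μ.map (fun ω => (Xa ω, Xb ω))
      = (volume : Measure (ℝ × ℝ)).withDensity fun p => ENNReal.ofReal (fab p.1 p.2))
    (fa fb : ℝ → ℝ) (hfann : ∀ t, 0 ≤ fa t) (hfbnn : ∀ t, 0 ≤ fb t)
    (hfa : μ.map Xa = volume.withDensity fun t => ENNReal.ofReal (fa t))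
    (hfb : μ.map Xb = volume.withDensity fun t => ENNReal.ofReal (fb t))
    (g : ℝ → ℝ) (α : ℝ) (hα : 0 < α) (hg : RegularlyVarying g (-α - 1))
    (ca cb : ℝ) (hca : 0 < ca) (hcb : 0 < cb)
    (hfa_lim : Tendsto (fun t => fa t / g t) atTop (𝓝 ca))
    (hfb_lim : Tendsto (fun t => fb t / g t) atTop (𝓝 cb))
    (qab qba : ℝ → ℝ)
    (hqabnn : ∀ y, 0 ≤ qab y) (hqbann : ∀ y, 0 ≤ qba y)
    (hqab_dens : ∫ y in Set.Ioi (0:ℝ), qab y = 1)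
    (hqba_dens : ∫ y in Set.Ioi (0:ℝ), qba y = 1)
    (hqab : ∀ y : ℝ, 0 < y →
      Tendsto (fun t => t * fab t (t * y) / fa t) atTop (𝓝 (qab y)))
    (hqba : ∀ y : ℝ, 0 < y →
      Tendsto (fun t => t * fab (t * y) t / fb t) atTop (𝓝 (qba y))) :
    ∀ᵐ y ∂(volume.restrict (Set.Ioi (0:ℝ))),
      cb * y ^ α * qba y = ca * y ^ (-2 : ℝ) * qab (1 / y) :=
  density_increment_reversal_general fab fa fb g α hg ca cb hca hcb hfa_lim hfb_lim qab qba hqab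
    hqba
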